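/- arXiv:1802.07632 — 2 statements merged into one kernel-verified Lean document; each statement's English description precedes it below -/
import Mathlib

section
/- There exist a constant c > 0 and an integer n₀ such that for every integer n ≥ n₀ and every integer m satisfying max{16·n·ln n, 100·n} ≤ m ≤ n²/2, there exists a connected finite simple graph G with at most 3n vertices, with number of edges between m and 7m, whose spanning tree congestion satisfies STC(G) ≥ c·√(m·n). -/
open SimpleGraph

namespace STCPaper

variable {V : Type*}

/-- The number of edges of `G` with exactly one endpoint in `S`. -/
noncomputable def cutCount (G : SimpleGraph V) (S : Set V) : ℕ :=
  {e ∈ G.edgeSet | ∃ a b, e = s(a, b) ∧ a ∈ S ∧ b ∉ S}.ncard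

/-- The degree of a vertex. -/
noncomputable def deg (G : SimpleGraph V) (v : V) : ℕ := (G.neighborSet v).ncard

/-- The number of edges of a graph. -/
noncomputable def numEdges (G : SimpleGraph V) : ℕ := G.edgeSet.ncard

/-- `T` is a spanning tree of `G`. -/
def IsSpanningTree (G T : SimpleGraph V) : Prop := T ≤ G ∧ T.IsTree

/-- The congestion of a spanning tree `T` of `G`: the maximum, over tree edges `e = {u,v}`,
of the number of edges of `G` crossing the cut induced by deleting `e` from `T`. -/
noncomputable def congestion (G T : SimpleGraph V) : ℕ :=
  sSup {c | ∃ u v, T.Adj u v ∧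
    c = cutCount G {w | (T.deleteEdges {s(u, v)}).Reachable w u}}

/-- The spanning tree congestion of `G`. -/
noncomputable def STC (G : SimpleGraph V) : ℕ :=
  sInf {c | ∃ T, IsSpanningTree G T ∧ c = congestion G T}

/-- `G` is `k`-(vertex-)connected: it has more than `k` vertices, and deleting any
set of fewer than `k` vertices leaves a connected graph. -/
def IsKConnected [Fintype V] (G : SimpleGraph V) (k : ℕ) : Prop :=
  k < Fintype.card V ∧ ∀ S : Set V, S.ncard < k → (G.induce Sᶜ).Connected

/-- A `k`-connected-partition: a partition of the vertex set into `k` nonempty parts,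
each inducing a connected subgraph. -/
def IsConnectedPartition [Fintype V] [DecidableEq V] (G : SimpleGraph V) {k : ℕ}
    (P : Fin k → Finset V) : Prop :=
  (∀ j, (P j).Nonempty) ∧
  (∀ i j, i ≠ j → Disjoint (P i) (P j)) ∧
  Finset.univ.biUnion P = Finset.univ ∧
  ∀ j, (G.induce (↑(P j) : Set V)).Connected

/-- The number of vertices outside `S` adjacent to some vertex of `S`. -/
noncomputable def nbrCount (G : SimpleGraph V) (S : Set V) : ℕ :=
  {v | v ∉ S ∧ ∃ u ∈ S, G.Adj u v}.ncard

/-- The number of vertices in `W` adjacent to some vertex of `S'`. -/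
noncomputable def nbrWithinCount (G : SimpleGraph V) (S' W : Set V) : ℕ :=
  {v ∈ W | ∃ u ∈ S', G.Adj u v}.ncard

/-- The Erdős–Rényi measure: product Bernoulli(p) measure on potential edges. -/
noncomputable def erdosRenyi (n : ℕ) (p : ℝ) :
    MeasureTheory.Measure (Sym2 (Fin n) → Bool) :=
  MeasureTheory.Measure.pi fun _ =>
    (PMF.bernoulli (min (Real.toNNReal p) 1) (min_le_right _ _)).toMeasure

/-- The simple graph sampled from an outcome `ω`. -/
def graphOf {n : ℕ} (ω : Sym2 (Fin n) → Bool) : SimpleGraph (Fin n) :=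
  SimpleGraph.fromEdgeSet {e | ω e = true}

end STCPaper

/-!
The graph is `ringGraph b D s`: four communities of `b ≈ 3n/4` vertices arranged in a cycle, each
with `D + s` hubs adjacent to the whole community, `s ≈ √D` of which are gateways, also adjacent
to the whole next community; with `D ≈ m / (2b)` it has between `m` and `7m` edges.

Suppose a spanning tree `T` has congestion below `C ≈ (D + s) β / 2`, where `β ≈ b / (16 s)`.
A side of a tree edge meeting some community in between `β` and `b - β` vertices cuts
`(D + s) β / 2` hub edges, and a side containing almost all of one community but almost none of
the next cuts `s (b - β)` gateway edges. So every tree edge has a side meeting each community in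
fewer than `β` vertices, and a largest such side yields a vertex `v` all of whose branches are of
this kind. The community opposite to `v` can only be entered through the `2s` gateways of itself
and of its predecessor, so it is covered by at most `2s` branches, each holding fewer than `β` of
its `b` vertices: `b < 2 s β`, a contradiction. Finally `C ≈ √D b / 32 ≈ √(mn) / 50`.
-/

open Fin.NatCast in
lemma Fin.forall_of_imp_add_one {n : ℕ} [NeZero n] {P : Fin n → Prop}
    (hP : ∀ j, P j → P (j + 1)) {i : Fin n} (hi : P i) (j : Fin n) : P j := by
  have key : ∀ k : ℕ, P (i + (k : Fin n)) := by
    intro k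
    induction k with
    | zero => simpa using hi
    | succ k ih => simpa [add_assoc] using hP _ ih
  simpa using key (j - i).val

namespace STCPaper

open Finset

variable {V : Type*}

section Cuts

open scoped Classical

variable (G : SimpleGraph V) (S : Set V)

lemma cutCount_compl : cutCount G Sᶜ = cutCount G S := by
  unfold cutCount
  congr 1
  ext e
  refine ⟨fun ⟨he, a, b, hab, ha, hb⟩ => ⟨he, b, a, ?_, not_not.mp hb, ha⟩,
    fun ⟨he, a, b, hab, ha, hb⟩ => ⟨he, b, a, ?_, hb, not_not.mpr ha⟩⟩ <;>
  rw [hab, Sym2.eq_swap]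

lemma card_le_cutCount [Finite V] (P : Finset (V × V))
    (hP : ∀ p ∈ P, p.1 ∈ S ∧ p.2 ∉ S ∧ G.Adj p.1 p.2) : #P ≤ cutCount G S := by
  have hinj : Set.InjOn (fun p : V × V => s(p.1, p.2)) P := by
    rintro ⟨a, b⟩ hab ⟨a', b'⟩ hab' he
    obtain ⟨ha, hb, -⟩ := hP _ hab
    obtain ⟨ha', hb', -⟩ := hP _ hab'
    rcases Sym2.eq_iff.mp he with ⟨rfl, rfl⟩ | ⟨rfl, rfl⟩
    · rfl
    · exact absurd ha hb'
  rw [← Set.ncard_coe_finset, ← hinj.ncard_image]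
  refine Set.ncard_le_ncard ?_ (Set.toFinite _)
  rintro _ ⟨p, hp, rfl⟩
  obtain ⟨ha, hb, hadj⟩ := hP p hp
  exact ⟨hadj, p.1, p.2, rfl, ha, hb⟩

lemma card_mul_add_card_mul_le_cutCount [Finite V] {X Y X' Y' : Finset V}
    (h : ∀ x ∈ X, ∀ y ∈ Y, x ∈ S ∧ y ∉ S ∧ G.Adj x y)
    (h' : ∀ x ∈ X', ∀ y ∈ Y', x ∈ S ∧ y ∉ S ∧ G.Adj x y)
    (hd : Disjoint X X' ∨ Disjoint Y Y') : #X * #Y + #X' * #Y' ≤ cutCount G S := by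
  rw [← card_product, ← card_product, ← card_union_of_disjoint (disjoint_product.mpr hd)]
  refine card_le_cutCount G S _ fun p hp => ?_
  rcases mem_union.mp hp with hp | hp <;> rw [mem_product] at hp
  exacts [h _ hp.1 _ hp.2, h' _ hp.1 _ hp.2]

lemma numEdges_le_card (P : Finset (V × V)) (hP : ∀ x y, G.Adj x y → (x, y) ∈ P ∨ (y, x) ∈ P) :
    numEdges G ≤ #P := by
  calc numEdges G ≤ #(P.image fun p => s(p.1, p.2)) := by
        rw [numEdges, ← Set.ncard_coe_finset]
        refine Set.ncard_le_ncard (fun e he => ?_) (Set.toFinite _)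
        induction e with
        | h x y =>
          rcases hP x y he with h | h
          · exact mem_image.mpr ⟨_, h, rfl⟩
          · exact mem_image.mpr ⟨_, h, Sym2.eq_swap⟩
    _ ≤ #P := card_image_le

-- `p` of the `h` hubs and `x` of the `r` other vertices lie in the set, so `p * y + x * q` hub
-- edges leave it.
lemma mul_add_le_two_mul_add_mul {h r p q x y : ℕ} (eh : p + q = h) (er : x + y = r)
    (hhr : h ≤ r) (hhalf : 2 * (p + x) ≤ h + r) :
    h * (p + x) ≤ 2 * (p * y + x * q) := by
  subst eh er
  rcases le_total (4 * p) (p + q) with h4 | h4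
  · nlinarith
  · nlinarith [mul_le_mul' h4 hhalf, sq_nonneg ((q : ℤ) - p), mul_le_mul' hhr (le_refl (p + q))]

lemma mul_le_two_mul_add_mul {h r p q x y β : ℕ} (eh : p + q = h) (er : x + y = r)
    (hhr : h ≤ r) (hβ : β ≤ p + x) (hβ' : p + x + β ≤ h + r) :
    h * β ≤ 2 * (p * y + x * q) := by
  rcases le_total (2 * (p + x)) (h + r) with hhalf | hhalf
  · exact (Nat.mul_le_mul_left h hβ).trans (mul_add_le_two_mul_add_mul eh er hhr hhalf)
  · calc h * β ≤ h * (q + y) := Nat.mul_le_mul_left h (by omega)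
      _ ≤ 2 * (q * x + y * p) :=
        mul_add_le_two_mul_add_mul (by omega) (by omega) hhr (by omega)
      _ = 2 * (p * y + x * q) := by ring

lemma mul_le_two_mul_cutCount_of_hubs [Finite V] {H U : Finset V} {β : ℕ} (hHU : H ⊆ U)
    (hH : ∀ h ∈ H, ∀ u ∈ U, h ≠ u → G.Adj h u) (hHcard : 2 * #H ≤ #U)
    (hβ : β ≤ #{x ∈ U | x ∈ S}) (hβ' : #{x ∈ U | x ∈ S} + β ≤ #U) :
    #H * β ≤ 2 * cutCount G S := by
  have hcut : #{x ∈ H | x ∈ S} * #{x ∈ U \ H | x ∉ S} + #{x ∈ U \ H | x ∈ S} * #{x ∈ H | x ∉ S}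
      ≤ cutCount G S := by
    refine card_mul_add_card_mul_le_cutCount G S ?_ ?_ (Or.inl ?_)
    · simp only [mem_filter]
      exact fun h hh x hx => ⟨hh.2, hx.2, hH h hh.1 x (mem_sdiff.mp hx.1).1
        (ne_of_mem_of_not_mem hh.2 hx.2)⟩
    · simp only [mem_filter]
      exact fun x hx h hh => ⟨hx.2, hh.2, (hH h hh.1 x (mem_sdiff.mp hx.1).1
        (ne_of_mem_of_not_mem hx.2 hh.2).symm).symm⟩
    · exact disjoint_filter_filter sdiff_disjoint.symm
  have hH := card_filter_add_card_filter_not (s := H) (· ∈ S)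
  have hR := card_filter_add_card_filter_not (s := U \ H) (· ∈ S)
  have hUS : #{x ∈ U | x ∈ S} = #{x ∈ H | x ∈ S} + #{x ∈ U \ H | x ∈ S} := by
    rw [← card_union_of_disjoint (disjoint_filter_filter disjoint_sdiff), ← filter_union,
      union_sdiff_of_subset hHU]
  rw [card_sdiff_of_subset hHU] at hR
  have := card_le_card hHU
  have := mul_le_two_mul_add_mul (β := β) hH hR (by omega) (by omega) (by omega)
  omega

lemma card_mul_le_cutCount_of_gateways [Finite V] {Γ U₁ U₂ : Finset V} {k : ℕ} (hΓU : Γ ⊆ U₁)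
    (hU : Disjoint U₁ U₂) (hΓ₁ : ∀ g ∈ Γ, ∀ u ∈ U₁, g ≠ u → G.Adj g u)
    (hΓ₂ : ∀ g ∈ Γ, ∀ u ∈ U₂, g ≠ u → G.Adj g u)
    (hk₁ : k ≤ #{x ∈ U₁ | x ∈ S}) (hk₂ : k ≤ #{x ∈ U₂ | x ∉ S}) :
    #Γ * k ≤ cutCount G S := by
  calc #Γ * k = #{x ∈ Γ | x ∈ S} * k + k * #{x ∈ Γ | x ∉ S} := by
        rw [mul_comm k, ← add_mul, card_filter_add_card_filter_not]
    _ ≤ #{x ∈ Γ | x ∈ S} * #{x ∈ U₂ | x ∉ S} + #{x ∈ U₁ | x ∈ S} * #{x ∈ Γ | x ∉ S} := by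
        gcongr
    _ ≤ cutCount G S := by
        refine card_mul_add_card_mul_le_cutCount G S ?_ ?_ (Or.inr ?_)
        · simp only [mem_filter]
          exact fun g hg x hx => ⟨hg.2, hx.2, hΓ₂ g hg.1 x hx.1 (ne_of_mem_of_not_mem hg.2 hx.2)⟩
        · simp only [mem_filter]
          exact fun x hx g hg =>
            ⟨hx.2, hg.2, (hΓ₁ g hg.1 x hx.1 (ne_of_mem_of_not_mem hx.2 hg.2).symm).symm⟩
        · exact disjoint_filter_filter (hU.symm.mono_right hΓU)

end Cuts

section Tree

variable {T : SimpleGraph V} {u v w x : V}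

def side (T : SimpleGraph V) (u v : V) : Set V :=
  {w | (T.deleteEdges {s(u, v)}).Reachable w u}

lemma mem_side_self (T : SimpleGraph V) (u v : V) : u ∈ side T u v :=
  Reachable.refl _

lemma not_mem_side (hT : T.IsAcyclic) (h : T.Adj u v) : v ∉ side T u v := fun hv =>
  (isAcyclic_iff_forall_adj_isBridge.mp hT h) hv.symm

lemma disjoint_side (hT : T.IsAcyclic) (h : T.Adj u v) :
    Disjoint (side T u v) (side T v u) := by
  refine Set.disjoint_left.mpr fun x hu hv => not_mem_side hT h ?_
  rw [side, Set.mem_ofPred_eq, Sym2.eq_swap] at hv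
  exact hv.symm.trans hu

lemma mem_side_of_mem_support (p : (T.deleteEdges {s(w, v)}).Walk w x) {y : V}
    (hy : y ∈ p.support) : y ∈ side T w v := by
  classical
  exact (p.takeUntil y hy).reachable.symm

lemma exists_adj_mem_side (hT : T.Connected) (hx : x ≠ v) :
    ∃ w, T.Adj v w ∧ x ∈ side T w v := by
  obtain ⟨p, hp⟩ := (hT.preconnected v x).exists_isPath
  cases p with
  | nil => exact absurd rfl hx
  | cons h q =>
    rw [SimpleGraph.Walk.cons_isPath_iff] at hp
    refine ⟨_, h, (reachable_deleteEdges_iff_exists_walk.mpr ⟨q, fun hq => ?_⟩).symm⟩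
    exact hp.2 (q.snd_mem_support_of_mem_edges hq)

lemma side_subset_side (hT : T.IsAcyclic) (hu : T.Adj v u) (huw : u ≠ w) :
    side T u v ⊆ side T v w := by
  intro x hx
  obtain ⟨p, hp⟩ := reachable_deleteEdges_iff_exists_walk.mp (hx.symm : _)
  have hv : v ∉ p.support := by
    classical
    intro hv
    refine not_mem_side hT hu.symm (reachable_deleteEdges_iff_exists_walk.mpr
      ⟨(p.takeUntil v hv).reverse, fun he => hp ?_⟩)
    exact p.edges_takeUntil_subset_edges hv (by simpa using he)
  refine (reachable_deleteEdges_iff_exists_walk.mpr ⟨SimpleGraph.Walk.cons hu p, ?_⟩).symm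
  simp only [SimpleGraph.Walk.edges_cons, List.mem_cons, Sym2.eq_iff, not_or]
  exact ⟨⟨fun h => huw h.2.symm, fun h => hu.ne h.1⟩,
    fun he => hv (p.fst_mem_support_of_mem_edges he)⟩

lemma side_compl (hT : T.IsTree) (h : T.Adj u v) : side T v u = (side T u v)ᶜ := by
  ext x
  refine ⟨fun hx hx' => Set.disjoint_left.mp (disjoint_side hT.2 h) hx' hx, fun hx => ?_⟩
  have hxu : x ≠ u := fun hxu => hx (hxu ▸ mem_side_self T u v)
  obtain ⟨w, hw, hxw⟩ := exists_adj_mem_side hT.1 hxu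
  rcases eq_or_ne w v with rfl | hwv
  · exact hxw
  · exact absurd (side_subset_side hT.2 hw hwv hxw) hx

lemma disjoint_side_of_ne (hT : T.IsTree) (hu : T.Adj v u) (hw : T.Adj v w) (huw : u ≠ w) :
    Disjoint (side T u v) (side T w v) := by
  rw [← compl_compl (side T w v), ← side_compl hT hw.symm]
  exact Set.disjoint_compl_right_iff_subset.mpr (side_subset_side hT.2 hu huw)

/-- Take a `P`-side `side T u v` of maximal size: for `w ≠ u` it is strictly contained in
`side T v w`, which therefore fails `P`, so `side T w v` satisfies it. -/
lemma exists_forall_side [Finite V] (hT : T.IsTree) (P : Set V → Prop)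
    (hP : ∀ u v, T.Adj u v → P (side T u v) ∨ P (side T v u)) :
    ∃ v, ∀ w, T.Adj v w → P (side T w v) := by
  classical
  have := Fintype.ofFinite V
  let E : Finset (V × V) := {e | T.Adj e.1 e.2 ∧ P (side T e.1 e.2)}
  rcases E.eq_empty_or_nonempty with hE | hE
  · obtain ⟨v⟩ := hT.1.nonempty
    refine ⟨v, fun w hw => (hP v w hw).resolve_left fun hvw => ?_⟩
    exact (Finset.eq_empty_iff_forall_notMem.mp hE) (v, w) (by simp [E, hw, hvw])
  obtain ⟨⟨u, v⟩, huv, hmax⟩ := E.exists_max_image (fun e => (side T e.1 e.2).ncard) hE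
  simp only [E, Finset.mem_filter, Finset.mem_univ, true_and] at huv hmax
  refine ⟨v, fun w hw => ?_⟩
  rcases eq_or_ne u w with rfl | huw
  · exact huv.2
  refine (hP w v hw.symm).resolve_right fun hvw => ?_
  have hlt : (side T u v).ncard < (side T v w).ncard := by
    refine Set.ncard_lt_ncard ?_ (Set.toFinite _)
    exact (Set.ssubset_iff_of_subset (side_subset_side hT.2 huv.1.symm huw)).mpr
      ⟨v, mem_side_self T v w, not_mem_side hT.2 huv.1⟩
  exact (hmax (v, w) ⟨hw, hvw⟩).not_gt hlt

open scoped Classical in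
/-- The components of `T - v` are the sides `side T w v`; each one meeting `A` contains an
endpoint in `Γ` of a tree edge entering `A`, and they are disjoint, so at most `#Γ` of them
meet `A`. -/
lemma card_le_card_mul_of_forall_side [Fintype V] (hT : T.IsTree) {v : V} {A Γ : Finset V}
    {k : ℕ} (hvA : v ∉ A) (hnbr : ∀ w, T.Adj v w → w ∉ A)
    (hΓ : ∀ y z, T.Adj y z → y ∉ A → z ∈ A → y ∈ Γ ∨ z ∈ Γ)
    (hk : ∀ w, T.Adj v w → #{x ∈ A | x ∈ side T w v} ≤ k) : #A ≤ #Γ * k := by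
  let W : Finset V := {w | T.Adj v w ∧ ∃ x ∈ A, x ∈ side T w v}
  have hAW : #A * 1 ≤ #W * k := by
    refine card_mul_le_card_mul (fun x w => x ∈ side T w v) (fun x hx => ?_) (fun w hw => ?_)
    · obtain ⟨w, hw, hxw⟩ := exists_adj_mem_side hT.1 (ne_of_mem_of_not_mem hx hvA)
      exact card_pos.mpr ⟨w, mem_filter.mpr ⟨mem_filter.mpr ⟨mem_univ _, hw, x, hx, hxw⟩, hxw⟩⟩
    · exact hk w (by simp only [W, mem_filter] at hw; exact hw.2.1)
  have hWΓ : #W ≤ #Γ := by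
    refine card_le_card_of_forall_subsingleton (fun w g => g ∈ side T w v) (fun w hw => ?_) ?_
    · simp only [W, mem_filter, mem_univ, true_and] at hw
      obtain ⟨hw, x, hx, hxw⟩ := hw
      obtain ⟨p⟩ := (hxw : _).symm
      obtain ⟨d, hd, hd₁, hd₂⟩ := p.exists_boundary_dart (↑A)ᶜ (by simpa using hnbr w hw)
        (by simpa using hx)
      have h₁ := mem_side_of_mem_support p (p.dart_fst_mem_support_of_mem_darts hd)
      have h₂ := mem_side_of_mem_support p (p.dart_snd_mem_support_of_mem_darts hd)
      rcases hΓ _ _ (SimpleGraph.deleteEdges_le _ d.adj) (by simpa using hd₁)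
        (by simpa using hd₂) with h | h
      · exact ⟨_, h, h₁⟩
      · exact ⟨_, h, h₂⟩
    · intro g _ w₁ hw₁ w₂ hw₂
      simp only [W, Set.mem_ofPred_eq, mem_filter, mem_univ, true_and] at hw₁ hw₂
      by_contra hne
      exact Set.disjoint_left.mp (disjoint_side_of_ne hT hw₁.1.1 hw₂.1.1 hne) hw₁.2 hw₂.2
  calc #A = #A * 1 := (mul_one _).symm
    _ ≤ #W * k := hAW
    _ ≤ #Γ * k := Nat.mul_le_mul_right _ hWΓ

end Tree

section Congestion

variable {G T : SimpleGraph V}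

lemma cutCount_le_numEdges [Finite V] (G : SimpleGraph V) (S : Set V) :
    cutCount G S ≤ numEdges G :=
  Set.ncard_le_ncard (fun _ he => he.1) (Set.toFinite _)

lemma le_congestion [Finite V] {u v : V} (h : T.Adj u v) :
    cutCount G (side T u v) ≤ congestion G T :=
  le_csSup ⟨numEdges G, by rintro c ⟨a, b, -, rfl⟩; exact cutCount_le_numEdges G _⟩
    ⟨u, v, h, rfl⟩

lemma le_STC {C : ℕ} (hG : G.Connected) (h : ∀ T, IsSpanningTree G T → C ≤ congestion G T) :
    C ≤ STC G := by
  obtain ⟨T, hTG, hT⟩ := hG.exists_isTree_le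
  exact le_csInf ⟨_, T, ⟨hTG, hT⟩, rfl⟩ fun c ⟨T, hT, hc⟩ => hc ▸ h T hT

end Congestion

section RingGraph

variable {b D s : ℕ}

def community (x : Fin (4 * b)) : Fin 4 := (finProdFinEquiv.symm x).1

def index (x : Fin (4 * b)) : ℕ := (finProdFinEquiv.symm x).2

def band (j : Fin 4) (lo hi : ℕ) : Finset (Fin (4 * b)) :=
  {x | community x = j ∧ lo ≤ index x ∧ index x < hi}

lemma index_lt (x : Fin (4 * b)) : index x < b := (finProdFinEquiv.symm x).2.isLt

@[simp]
lemma mem_band {j : Fin 4} {lo hi : ℕ} {x : Fin (4 * b)} :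
    x ∈ band j lo hi ↔ community x = j ∧ lo ≤ index x ∧ index x < hi := by
  simp [band]

lemma card_band (j : Fin 4) {lo hi : ℕ} (h : hi ≤ b) :
    #(band j lo hi : Finset (Fin (4 * b))) = hi - lo := by
  have hIco : (({i : Fin b | lo ≤ (i : ℕ) ∧ (i : ℕ) < hi} : Finset (Fin b)).map Fin.valEmbedding)
      = Ico lo hi := by
    ext i
    simp only [mem_map, mem_filter, mem_univ, true_and, Fin.valEmbedding_apply, mem_Ico]
    exact ⟨fun ⟨i, hi, he⟩ => he ▸ hi, fun hi' => ⟨⟨i, by omega⟩, hi', rfl⟩⟩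
  calc #(band j lo hi : Finset (Fin (4 * b)))
      = #({j} ×ˢ ({i : Fin b | lo ≤ (i : ℕ) ∧ (i : ℕ) < hi} : Finset (Fin b))) :=
        card_equiv finProdFinEquiv.symm fun x => by
          simp [band, community, index, Prod.ext_iff, eq_comm (a := j)]; tauto
    _ = hi - lo := by rw [card_product, card_singleton, one_mul, ← card_map, hIco, Nat.card_Ico]

/-- Four communities of `b` vertices arranged in a cycle. The vertices of index below `D + s` are
hubs, adjacent to their whole community; those of index in `[D, D + s)` are moreover gateways,
adjacent to the whole next community. -/
def ringGraph (b D s : ℕ) : SimpleGraph (Fin (4 * b)) :=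
  SimpleGraph.fromRel fun x y => index x < D + s ∧
    (community y = community x ∨ D ≤ index x ∧ community y = community x + 1)

variable {x y : Fin (4 * b)}

lemma ringGraph_adj_of_hub (hxy : x ≠ y) (hx : index x < D + s)
    (h : community y = community x) : (ringGraph b D s).Adj x y :=
  ⟨hxy, Or.inl ⟨hx, Or.inl h⟩⟩

lemma ringGraph_adj_of_gateway (hxy : x ≠ y) (hx : D ≤ index x) (hx' : index x < D + s)
    (h : community y = community x + 1) : (ringGraph b D s).Adj x y :=
  ⟨hxy, Or.inl ⟨hx', Or.inr ⟨hx, h⟩⟩⟩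

lemma ringGraph_connected (hs : 0 < s) (hDs : D + s ≤ b) : (ringGraph b D s).Connected := by
  let g : Fin 4 → Fin (4 * b) := fun j => finProdFinEquiv (j, ⟨D, by omega⟩)
  have hg : ∀ j, community (g j) = j ∧ index (g j) = D := fun j => by simp [g, community, index]
  have hcycle : ∀ j, (ringGraph b D s).Reachable (g 0) (g j) := by
    refine Fin.forall_of_imp_add_one (fun j h => h.trans (Adj.reachable ?_)) (Reachable.refl _)
    refine ringGraph_adj_of_gateway (fun he => ?_) (hg j).2.ge (by rw [(hg j).2]; omega)
      (by simp [hg])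
    exact left_ne_add.mpr one_ne_zero (by simpa only [hg] using congrArg community he)
  have hcomm : ∀ x, (ringGraph b D s).Reachable (g (community x)) x := fun x => by
    by_cases hx : g (community x) = x
    · rw [hx]
    · exact (ringGraph_adj_of_hub hx (by rw [(hg _).2]; omega) (hg _).1.symm).reachable
  exact (connected_iff _).mpr
    ⟨fun x y => ((hcycle _).trans (hcomm x)).symm.trans ((hcycle _).trans (hcomm y)), ⟨g 0⟩⟩

lemma community_ne_of_ringGraph_adj (h : (ringGraph b D s).Adj x y) :
    community y ≠ community x + 1 + 1 := by
  have key : ∀ c d : Fin 4, (d = c ∨ d = c + 1 ∨ c = d ∨ c = d + 1) → d ≠ c + 1 + 1 := by decide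
  rcases h with ⟨-, ⟨-, h | ⟨-, h⟩⟩ | ⟨-, h | ⟨-, h⟩⟩⟩ <;> apply key <;> simp [h]

lemma mem_gateways_of_ringGraph_adj {j : Fin 4} (h : (ringGraph b D s).Adj x y)
    (hx : community x ≠ j + 1) (hy : community y = j + 1) :
    x ∈ band j D (D + s) ∨ y ∈ band (j + 1) D (D + s) := by
  rcases h with ⟨-, ⟨hx', h | ⟨hD, h⟩⟩ | ⟨hy', h | ⟨hD, h⟩⟩⟩
  · exact absurd (h ▸ hy) hx
  · exact Or.inl (mem_band.mpr ⟨add_right_cancel (h ▸ hy), hD, hx'⟩)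
  · exact absurd (h ▸ hy) hx
  · exact Or.inr (mem_band.mpr ⟨hy, hD, hy'⟩)

lemma numEdges_ringGraph_le (hDs : D + s ≤ b) :
    numEdges (ringGraph b D s) ≤ 4 * ((D + s) * b + s * b) := by
  classical
  let P : Fin 4 → Finset (Fin (4 * b) × Fin (4 * b)) := fun j =>
    band j 0 (D + s) ×ˢ band j 0 b ∪ band j D (D + s) ×ˢ band (j + 1) 0 b
  calc numEdges (ringGraph b D s) ≤ #(univ.biUnion P) := by
        refine numEdges_le_card _ _ fun x y hxy => ?_
        have hsees : ∀ x y : Fin (4 * b), index x < D + s ∧ (community y = community x ∨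
            D ≤ index x ∧ community y = community x + 1) → (x, y) ∈ univ.biUnion P := by
          rintro x y ⟨hx, h | ⟨hD, h⟩⟩ <;> refine mem_biUnion.mpr ⟨community x, mem_univ _, ?_⟩
          · exact mem_union_left _ (mem_product.mpr
              ⟨mem_band.mpr ⟨rfl, by omega, hx⟩, mem_band.mpr ⟨h, by omega, index_lt y⟩⟩)
          · exact mem_union_right _ (mem_product.mpr
              ⟨mem_band.mpr ⟨rfl, hD, hx⟩, mem_band.mpr ⟨h, by omega, index_lt y⟩⟩)
        exact hxy.2.imp (hsees x y) (hsees y x)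
    _ ≤ #(univ : Finset (Fin 4)) * ((D + s) * b + s * b) := by
        refine card_biUnion_le_card_mul _ _ _ fun j _ => (card_union_le _ _).trans ?_
        simp only [card_product, card_band _ hDs, card_band _ le_rfl, Nat.sub_zero,
          Nat.add_sub_cancel_left, le_refl]
    _ = 4 * ((D + s) * b + s * b) := by simp

lemma numEdges_ringGraph_ge (hDs : D + s ≤ b) :
    4 * (D * (b - (D + s))) ≤ numEdges (ringGraph b D s) := by
  classical
  let P : Fin 4 → Finset (Fin (4 * b) × Fin (4 * b)) := fun j => band j 0 D ×ˢ band j (D + s) b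
  have hP : ((univ : Finset (Fin 4)) : Set (Fin 4)).PairwiseDisjoint P := fun j _ j' _ hjj' =>
    disjoint_product.mpr (Or.inl (disjoint_left.mpr fun x hx hx' =>
      hjj' ((mem_band.mp hx).1.symm.trans (mem_band.mp hx').1)))
  calc 4 * (D * (b - (D + s))) = #(univ.biUnion P) := by
        simp [P, card_biUnion hP, card_product, card_band _ le_rfl, card_band _ (by omega : D ≤ b)]
    _ ≤ cutCount (ringGraph b D s) {x | index x < D} := by
        refine card_le_cutCount _ _ _ fun p hp => ?_
        obtain ⟨j, -, hp⟩ := mem_biUnion.mp hp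
        obtain ⟨hx, hy⟩ := mem_product.mp hp
        rw [mem_band] at hx hy
        refine ⟨hx.2.2, by simp only [Set.mem_ofPred_eq]; omega, ringGraph_adj_of_hub ?_ (by omega)
          (hy.1.trans hx.1.symm)⟩
        exact fun he => by rw [he] at hx; omega
    _ ≤ numEdges (ringGraph b D s) := cutCount_le_numEdges _ _

section Load

open scoped Classical

variable {C β : ℕ} {S : Set (Fin (4 * b))}

noncomputable def load (S : Set (Fin (4 * b))) (j : Fin 4) : ℕ := #{x ∈ band j 0 b | x ∈ S}

lemma load_add_load_compl (S : Set (Fin (4 * b))) (j : Fin 4) : load S j + load Sᶜ j = b := by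
  simp only [load, Set.mem_compl_iff]
  rw [card_filter_add_card_filter_not, card_band _ le_rfl, Nat.sub_zero]

lemma load_lt_or_load_compl_lt (hb : 2 * (D + s) ≤ b) (hsplit : 2 * C ≤ (D + s) * β)
    (hcut : cutCount (ringGraph b D s) S < C) (j : Fin 4) : load S j < β ∨ load Sᶜ j < β := by
  by_contra! h
  have := mul_le_two_mul_cutCount_of_hubs (ringGraph b D s) S (H := band j 0 (D + s))
    (U := band j 0 b) (β := β) (fun x hx => by simp only [mem_band] at hx ⊢; omega)
    (fun x hx y hy hxy => ringGraph_adj_of_hub hxy (mem_band.mp hx).2.2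
      ((mem_band.mp hy).1.trans (mem_band.mp hx).1.symm))
    (by simpa [card_band _ le_rfl, card_band _ (by omega : D + s ≤ b)] using hb) h.1
    (by have := load_add_load_compl S j; simp only [load, card_band _ le_rfl] at this h ⊢; omega)
  rw [card_band _ (by omega), Nat.sub_zero] at this
  omega

lemma not_load_compl_lt_and_load_lt (hDs : D + s ≤ b) (hbundle : C + s * β ≤ s * b)
    (hcut : cutCount (ringGraph b D s) S < C) (j : Fin 4) :
    ¬ (load Sᶜ j < β ∧ load S (j + 1) < β) := by
  rintro ⟨h₁, h₂⟩
  have hj : Disjoint (band j 0 b) (band (j + 1) 0 b : Finset (Fin (4 * b))) :=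
    disjoint_left.mpr fun x hx hx' =>
      left_ne_add.mpr one_ne_zero ((mem_band.mp hx).1.symm.trans (mem_band.mp hx').1)
  have := card_mul_le_cutCount_of_gateways (ringGraph b D s) S (Γ := band j D (D + s))
    (U₁ := band j 0 b) (U₂ := band (j + 1) 0 b) (k := b - β)
    (fun x hx => by simp only [mem_band] at hx ⊢; omega) hj
    (fun x hx y hy hxy => by
      rw [mem_band] at hx hy
      exact ringGraph_adj_of_hub hxy hx.2.2 (hy.1.trans hx.1.symm))
    (fun x hx y hy hxy => by
      rw [mem_band] at hx hy
      exact ringGraph_adj_of_gateway hxy hx.2.1 hx.2.2 (hy.1.trans (congrArg (· + 1) hx.1).symm))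
    (by have := load_add_load_compl S j; simp only [load] at this h₁ ⊢; omega)
    (by have := load_add_load_compl S (j + 1); simp only [load, Set.mem_compl_iff] at this h₂ ⊢;
        omega)
  rw [card_band _ hDs, Nat.add_sub_cancel_left, Nat.mul_sub] at this
  omega

lemma forall_load_lt_or_forall_load_compl_lt (hb : 2 * (D + s) ≤ b)
    (hsplit : 2 * C ≤ (D + s) * β) (hbundle : C + s * β ≤ s * b)
    (hcut : cutCount (ringGraph b D s) S < C) : (∀ j, load S j < β) ∨ (∀ j, load Sᶜ j < β) := by
  have hcut' : cutCount (ringGraph b D s) Sᶜ < C := by rwa [cutCount_compl]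
  have step : ∀ X : Set (Fin (4 * b)), cutCount (ringGraph b D s) X < C →
      cutCount (ringGraph b D s) Xᶜ < C → ∀ j, load X j < β → load X (j + 1) < β := by
    intro X hX hXc j hj
    refine (load_lt_or_load_compl_lt hb hsplit hX (j + 1)).resolve_right fun h => ?_
    exact not_load_compl_lt_and_load_lt (by omega) hbundle hXc j ⟨by rwa [compl_compl], h⟩
  rcases load_lt_or_load_compl_lt hb hsplit hcut 0 with h | h
  · exact Or.inl (Fin.forall_of_imp_add_one (step S hcut hcut') h)
  · exact Or.inr (Fin.forall_of_imp_add_one (step Sᶜ hcut' (by rwa [compl_compl])) h)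

theorem le_congestion_ringGraph {T : SimpleGraph (Fin (4 * b))} (hb : 2 * (D + s) ≤ b)
    (hsplit : 2 * C ≤ (D + s) * β) (hbundle : C + s * β ≤ s * b) (hcover : 2 * s * β < b)
    (hT : IsSpanningTree (ringGraph b D s) T) : C ≤ congestion (ringGraph b D s) T := by
  by_contra! hlt
  obtain ⟨v, hv⟩ := exists_forall_side hT.2 (fun S => ∀ j, load S j < β) fun u w h => by
    have := forall_load_lt_or_forall_load_compl_lt hb hsplit hbundle
      ((le_congestion h).trans_lt hlt)
    rwa [← side_compl hT.2 h] at this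
  have hA := card_le_card_mul_of_forall_side hT.2 (v := v) (A := band (community v + 1 + 1) 0 b)
    (Γ := band (community v + 1) D (D + s) ∪ band (community v + 1 + 1) D (D + s)) (k := β - 1)
    (fun h => by
      rw [mem_band, add_assoc] at h
      exact left_ne_add.mpr (by decide) h.1)
    (fun w hw h => community_ne_of_ringGraph_adj (hT.1 hw) (mem_band.mp h).1)
    (fun y z h hy hz => by
      rw [mem_band] at hy hz
      exact (mem_gateways_of_ringGraph_adj (hT.1 h) (fun h' => hy ⟨h', by omega, index_lt y⟩)
        hz.1).imp (mem_union_left _) (mem_union_right _))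
    (fun w hw => Nat.le_sub_one_of_lt (hv w hw _))
  have hΓ := card_union_le (band (community v + 1) D (D + s))
    (band (community v + 1 + 1) D (D + s) : Finset (Fin (4 * b)))
  rw [card_band _ le_rfl, Nat.sub_zero] at hA
  rw [card_band _ (by omega), card_band _ (by omega), Nat.add_sub_cancel_left] at hΓ
  have : b ≤ 2 * s * β := calc
    b ≤ (s + s) * (β - 1) := hA.trans (Nat.mul_le_mul_right _ hΓ)
    _ ≤ 2 * s * β := by rw [← two_mul]; exact Nat.mul_le_mul_left _ (Nat.sub_le _ _)
  omega

end Load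

theorem le_STC_ringGraph {C β : ℕ} (hs : 0 < s) (hb : 2 * (D + s) ≤ b)
    (hsplit : 2 * C ≤ (D + s) * β) (hbundle : C + s * β ≤ s * b) (hcover : 2 * s * β < b) :
    C ≤ STC (ringGraph b D s) :=
  le_STC (ringGraph_connected hs (by omega)) fun _ hT =>
    le_congestion_ringGraph hb hsplit hbundle hcover hT

end RingGraph

section Parameters

variable {n m b D s β C : ℕ}

lemma sqrt_add_one_mul_self_le (hD : 0 < D) :
    (Nat.sqrt D + 1) * (Nat.sqrt D + 1) ≤ 4 * D := by
  have h1 : 1 ≤ Nat.sqrt D := Nat.le_sqrt.mpr (by omega)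
  nlinarith [Nat.sqrt_le D]

lemma two_mul_add_le_and_sixteen_mul_le (hn : 10 ^ 6 ≤ n) (hm : 2 * m ≤ n ^ 2)
    (hb : 3 * n < 4 * b + 4) (hD : D * (2 * b) ≤ m + 2 * b) (hs : s * s ≤ 4 * D) :
    2 * (D + s) ≤ b ∧ 16 * s ≤ b := by
  have hD3 : 3 * D ≤ n + 6 := by nlinarith
  have hs' : 50 * s ≤ n := by nlinarith
  omega

lemma le_four_mul_mul_sub (hD : m < D * (2 * b)) (hDs : 2 * (D + s) ≤ b) :
    m ≤ 4 * (D * (b - (D + s))) := by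
  have : b ≤ 2 * (b - (D + s)) := by omega
  nlinarith

lemma four_mul_add_le_seven_mul (hD : D * (2 * b) ≤ m + 2 * b) (hs : s * s ≤ 4 * D)
    (hbm : 100 * b ≤ m) : 4 * ((D + s) * b + s * b) ≤ 7 * m := by
  have hsb : 2 * (s * b) ≤ m := by
    refine Nat.mul_self_le_mul_self_iff.mp ?_
    calc 2 * (s * b) * (2 * (s * b)) = 4 * (s * s) * (b * b) := by ring
      _ ≤ 4 * (4 * D) * (b * b) := by gcongr
      _ = 8 * b * (D * (2 * b)) := by ring
      _ ≤ 8 * b * (m + 2 * b) := by gcongr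
      _ ≤ m * m := by nlinarith
  nlinarith

lemma add_mul_le_mul_and_two_mul_lt (hs : 0 < s) (hβ₀ : 0 < β) (hsD : D < s * s)
    (hβ : 16 * s * β ≤ b) (hC : 2 * C ≤ (D + s) * β) :
    C + s * β ≤ s * b ∧ 2 * s * β < b := by
  constructor <;> nlinarith

lemma mul_le_thousand_sq_mul_sq (hD : m < D * (2 * b)) (hn : n ≤ 2 * b) (hs : s * s ≤ 4 * D)
    (hβ : b < 32 * s * β) (hC : (D + s) * β ≤ 2 * C + 1) (hsβ : 0 < s * β) :
    m * n ≤ 1000 ^ 2 * C ^ 2 := by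
  have hDβ : D * β ≤ 2 * C := by nlinarith
  calc m * n ≤ D * (2 * b) * (2 * b) := Nat.mul_le_mul hD.le hn
    _ = 4 * D * (b * b) := by ring
    _ ≤ 4 * D * ((32 * s * β) * (32 * s * β)) := by gcongr
    _ = 4096 * (s * s) * (D * β * β) := by ring
    _ ≤ 4096 * (4 * D) * (D * β * β) := by gcongr
    _ = 16384 * ((D * β) * (D * β)) := by ring
    _ ≤ 16384 * ((2 * C) * (2 * C)) := by gcongr
    _ ≤ 1000 ^ 2 * C ^ 2 := by nlinarith

lemma exists_ringGraph_params (hn : 10 ^ 6 ≤ n) (hm : 100 * n ≤ m) (hm' : 2 * m ≤ n ^ 2) :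
    ∃ b D s β C : ℕ, 4 * b ≤ 3 * n ∧ 0 < s ∧ 2 * (D + s) ≤ b ∧ 2 * C ≤ (D + s) * β ∧
      C + s * β ≤ s * b ∧ 2 * s * β < b ∧ m ≤ 4 * (D * (b - (D + s))) ∧
      4 * ((D + s) * b + s * b) ≤ 7 * m ∧ m * n ≤ 1000 ^ 2 * C ^ 2 := by
  set b := 3 * n / 4
  have hb : 4 * b ≤ 3 * n ∧ 3 * n < 4 * b + 4 := by omega
  set D := m / (2 * b) + 1 with hDdef
  have hD : D * (2 * b) ≤ m + 2 * b ∧ m < D * (2 * b) := by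
    have := Nat.div_mul_le_self m (2 * b)
    have := Nat.lt_div_mul_add (a := m) (b := 2 * b) (by omega)
    rw [hDdef, add_mul, one_mul]
    omega
  set s := Nat.sqrt D + 1
  have hs : D < s * s ∧ s * s ≤ 4 * D :=
    ⟨Nat.lt_succ_sqrt D, sqrt_add_one_mul_self_le (Nat.succ_pos _)⟩
  obtain ⟨hDs, h16⟩ := two_mul_add_le_and_sixteen_mul_le hn hm' hb.2 hD.1 hs.2
  set β := b / (16 * s) with hβdef
  have hβ : 0 < β ∧ 16 * s * β ≤ b ∧ b < 32 * s * β := by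
    have h₁ := Nat.div_mul_le_self b (16 * s)
    have h₂ := Nat.lt_div_mul_add (a := b) (b := 16 * s) (by omega)
    have h₃ := Nat.div_pos h16 (by omega)
    rw [← hβdef] at h₁ h₂ h₃
    refine ⟨h₃, ?_, ?_⟩ <;> nlinarith
  set C := (D + s) * β / 2
  have hC : 2 * C ≤ (D + s) * β ∧ (D + s) * β ≤ 2 * C + 1 := by omega
  obtain ⟨hbundle, hcover⟩ := add_mul_le_mul_and_two_mul_lt (by omega) hβ.1 hs.1 hβ.2.1 hC.1
  exact ⟨b, D, s, β, C, hb.1, by omega, hDs, hC.1, hbundle, hcover,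
    le_four_mul_mul_sub hD.2 hDs, four_mul_add_le_seven_mul hD.1 hs.2 (by omega),
    mul_le_thousand_sq_mul_sq hD.2 (by omega) hs.2 hβ.2.2 hC.2 (Nat.mul_pos (by omega) hβ.1)⟩

end Parameters

end STCPaper

open STCPaper in
/-- Lower bound: graphs with spanning tree congestion `Ω(√(mn))`. -/
theorem stmt_7 :
    ∃ c : ℝ, 0 < c ∧ ∃ n₀ : ℕ, ∀ n : ℕ, n₀ ≤ n → ∀ m : ℕ,
      16 * (n : ℝ) * Real.log n ≤ m → 100 * n ≤ m → (m : ℝ) ≤ (n : ℝ) ^ 2 / 2 →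
      ∃ (N : ℕ) (G : SimpleGraph (Fin N)), N ≤ 3 * n ∧ G.Connected ∧
        m ≤ numEdges G ∧ numEdges G ≤ 7 * m ∧
        c * Real.sqrt ((m : ℝ) * n) ≤ (STC G : ℝ) := by
  refine ⟨1 / 1000, by norm_num, 10 ^ 6, fun n hn m _ h100 hm => ?_⟩
  have hm' : 2 * m ≤ n ^ 2 := by exact_mod_cast (by linarith : (2 * m : ℝ) ≤ (n : ℝ) ^ 2)
  obtain ⟨b, D, s, β, C, hb, hs, hDs, hsplit, hbundle, hcover, hlow, hup, hC⟩ :=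
    exists_ringGraph_params hn h100 hm'
  refine ⟨4 * b, ringGraph b D s, by omega, ringGraph_connected hs (by omega),
    hlow.trans (numEdges_ringGraph_ge (by omega)), (numEdges_ringGraph_le (by omega)).trans hup, ?_⟩
  have hsqrt : Real.sqrt ((m : ℝ) * n) ≤ 1000 * C := by
    refine (Real.sqrt_le_left (by positivity)).mpr ?_
    exact_mod_cast hC.trans_eq (by ring)
  have hSTC : (C : ℝ) ≤ STC (ringGraph b D s) := by
    exact_mod_cast le_STC_ringGraph hs hDs hsplit hbundle hcover
  linarith
end

section
/- There exist a constant C > 0 and an integer n₀ such that for every n ≥ n₀ and every real p with 64·(ln n)/n ≤ p ≤ 1, in the Erdős–Rényi random graph G(n,p) the following holds with probability at least 1 − C/n²: every nonempty vertex set S with |S| ≤ 1/p satisfies |N(S)| ≥ (n·p/16)·|S|. -/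
open SimpleGraph

/-!
Fix a nonempty `S` with `|S| = s ≤ 1/p`. For `v ∉ S` the events "`v` has no neighbour in `S`"
are determined by the disjoint edge sets `{u, v}`, `u ∈ S`, so they are independent, each of
probability `(1 - p)^s`. Markov's inequality for `2^(-|N(S)|)` then gives
`P(|N(S)| ≤ nps/16) ≤ 2^(nps/16) ((1 + (1 - p)^s) / 2)^(n - s) ≤ exp(-nps/16) ≤ n^(-4s)`,
using `(1 + (1 - p)^s) / 2 ≤ exp(-ps/4)` (as `ps ≤ 1`), `s ≤ n/2` and `np ≥ 64 log n`.
A union bound over `S` costs `∑_{S ≠ ∅} n^(-4|S|) ≤ n^(-3) (1 + 1/n)^n ≤ 3/n²`.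
-/

open MeasureTheory ProbabilityTheory Finset
open scoped ENNReal

section LowerTail

variable {Ω ι : Type*} {mΩ : MeasurableSpace Ω} {μ : Measure Ω} [Fintype ι]

open scoped Classical in
/-- Markov's inequality for `2⁻¹ ^ X`, where `X` counts the events that fail; independence
factorises its mean. -/
theorem ProbabilityTheory.iIndepSet.measure_card_notMem_le {Z : ι → Set Ω} (hZ : iIndepSet Z μ)
    (hZm : ∀ i, MeasurableSet (Z i)) {r : ℝ} (hr : 0 ≤ r) (hZr : ∀ i, μ (Z i) ≤ ENNReal.ofReal r)
    (k : ℕ) :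
    μ {ω | #{i | ω ∉ Z i} ≤ k} ≤ ENNReal.ofReal (2 ^ k * ((1 + r) / 2) ^ Fintype.card ι) := by
  have := hZ.isProbabilityMeasure
  set Y : ι → Ω → ℝ≥0∞ := fun i ω => 2⁻¹ * (1 + (Z i).indicator 1 ω) with hY
  have hYm : ∀ i, Measurable (Y i) := fun i =>
    ((measurable_one.indicator (hZm i)).const_add 1).const_mul _
  have hYind : iIndepFun Y μ :=
    hZ.iIndepFun_indicator.comp (fun _ x => 2⁻¹ * (1 + x)) fun _ => by fun_prop
  have hprod : ∀ ω, ∏ i, Y i ω = 2⁻¹ ^ #{i | ω ∉ Z i} := by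
    intro ω
    rw [← prod_filter_not_mul_prod_filter univ (fun i => ω ∈ Z i),
      prod_congr rfl fun i hi => show Y i ω = 2⁻¹ by simp [hY, (mem_filter.1 hi).2],
      prod_const, prod_eq_one fun i hi => show Y i ω = 1 by
        simp [hY, (mem_filter.1 hi).2, one_add_one_eq_two, ENNReal.inv_mul_cancel], mul_one]
  have hint : ∫⁻ ω, ∏ i, Y i ω ∂μ ≤ ENNReal.ofReal ((1 + r) / 2) ^ Fintype.card ι := by
    rw [lintegral_prod_eq_prod_lintegral_of_indepFun _ _ hYind hYm, ← card_univ, ← prod_const]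
    refine prod_le_prod' fun i _ => ?_
    have hmean : ∫⁻ ω, Y i ω ∂μ = 2⁻¹ * (1 + μ (Z i)) := by
      simp only [hY]
      rw [lintegral_const_mul _ ((measurable_one.indicator (hZm i)).const_add 1),
        lintegral_add_left measurable_const, lintegral_const, measure_univ, mul_one,
        lintegral_indicator_one (hZm i)]
    calc ∫⁻ ω, Y i ω ∂μ = 2⁻¹ * (1 + μ (Z i)) := hmean
      _ ≤ 2⁻¹ * (1 + ENNReal.ofReal r) := by gcongr; exact hZr i
      _ = ENNReal.ofReal ((1 + r) / 2) := by
        rw [ENNReal.ofReal_div_of_pos two_pos, ENNReal.ofReal_add zero_le_one hr,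
          ENNReal.ofReal_one, ENNReal.ofReal_ofNat, ENNReal.div_eq_inv_mul]
  have hsub : {ω | #{i | ω ∉ Z i} ≤ k} ⊆ {ω | 2⁻¹ ^ k ≤ ∏ i, Y i ω} := fun ω hω => by
    rw [Set.mem_ofPred_eq, hprod]
    exact pow_le_pow_right_of_le_one' (by norm_num) hω
  have hmarkov := mul_meas_ge_le_lintegral₀
    (Finset.univ.measurable_prod fun i _ => hYm i).aemeasurable (2⁻¹ ^ k) (μ := μ)
  calc μ {ω | #{i | ω ∉ Z i} ≤ k} ≤ μ {ω | 2⁻¹ ^ k ≤ ∏ i, Y i ω} := measure_mono hsub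
    _ = 2 ^ k * (2⁻¹ ^ k * μ {ω | 2⁻¹ ^ k ≤ ∏ i, Y i ω}) := by
      rw [← mul_assoc, ← mul_pow, ENNReal.mul_inv_cancel two_ne_zero ENNReal.ofNat_ne_top,
        one_pow, one_mul]
    _ ≤ 2 ^ k * ENNReal.ofReal ((1 + r) / 2) ^ Fintype.card ι := by
      gcongr
      exact hmarkov.trans hint
    _ = ENNReal.ofReal (2 ^ k * ((1 + r) / 2) ^ Fintype.card ι) := by
      rw [ENNReal.ofReal_mul (by positivity), ENNReal.ofReal_pow (by positivity),
        ENNReal.ofReal_pow (by positivity), ENNReal.ofReal_ofNat]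

end LowerTail

section Estimates

open Real

theorem one_add_one_sub_pow_div_two_le_exp {p : ℝ} {s : ℕ} (hp0 : 0 ≤ p) (hp1 : p ≤ 1)
    (hsp : s * p ≤ 1) : (1 + (1 - p) ^ s) / 2 ≤ exp (-(s * p / 4)) := by
  set x := (s : ℝ) * p
  have hx0 : 0 ≤ x := by positivity
  have h1 : (1 - p) ^ s ≤ exp (-x) :=
    calc (1 - p) ^ s ≤ exp (-p) ^ s := pow_le_pow_left₀ (by linarith) (one_sub_le_exp_neg p) s
      _ = exp (-x) := by rw [← exp_nat_mul, mul_neg]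
  have h2 : exp (-x) * (1 + x) ≤ 1 :=
    calc exp (-x) * (1 + x) ≤ exp (-x) * exp x := by gcongr; linarith [add_one_le_exp x]
      _ = 1 := by rw [← exp_add, neg_add_cancel, exp_zero]
  have h3 : exp (-x) ≤ 1 - x / 2 := by nlinarith [exp_pos (-x)]
  linarith [add_one_le_exp (-(x / 4))]

theorem two_pow_floor_mul_pow_le {n s : ℕ} {p : ℝ} (hn : 2 ≤ n) (hp : 64 * log n / n ≤ p)
    (hp1 : p ≤ 1) (hs : (s : ℝ) ≤ 1 / p) :
    2 ^ ⌊(n : ℝ) * p / 16 * s⌋₊ * ((1 + (1 - p) ^ s) / 2) ^ (n - s) ≤ ((n : ℝ)⁻¹) ^ (4 * s) := by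
  have hn0 : (0 : ℝ) < n := by positivity
  have hlog : 1 / 32 < log n := by
    have := log_two_gt_d9
    have : log 2 ≤ log n := log_le_log two_pos (by exact_mod_cast hn)
    linarith
  have hnp : 64 * log n ≤ n * p := by rw [div_le_iff₀ hn0] at hp; linarith
  have hp0 : 0 < p := by nlinarith
  have hsp : s * p ≤ 1 := by rwa [le_div_iff₀ hp0] at hs
  have hsn : 2 * (s : ℝ) ≤ n := by nlinarith
  set a := (n : ℝ) * p / 16 * s with ha
  have h2 : (2 : ℝ) ^ ⌊a⌋₊ ≤ exp a :=
    calc (2 : ℝ) ^ ⌊a⌋₊ ≤ exp 1 ^ ⌊a⌋₊ := by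
          gcongr; linarith [add_one_le_exp 1]
      _ ≤ exp a := by
          rw [← exp_nat_mul, mul_one]
          exact exp_le_exp.2 (Nat.floor_le (by positivity))
  have hρ : ((1 + (1 - p) ^ s) / 2) ^ (n - s) ≤ exp (-(2 * a)) :=
    calc ((1 + (1 - p) ^ s) / 2) ^ (n - s) ≤ exp (-(s * p / 4)) ^ (n - s) :=
          pow_le_pow_left₀ (by positivity) (one_add_one_sub_pow_div_two_le_exp hp0.le hp1 hsp) _
      _ = exp (-(s * p / 4) * (n - s)) := by
          rw [← exp_nat_mul, Nat.cast_sub (by exact_mod_cast (by linarith : (s : ℝ) ≤ n))]; ring_nf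
      _ ≤ exp (-(2 * a)) := exp_le_exp.2 (by
          nlinarith [mul_nonneg (mul_nonneg s.cast_nonneg hp0.le)
            (by linarith : 0 ≤ (n : ℝ) - 2 * s), ha])
  calc 2 ^ ⌊a⌋₊ * ((1 + (1 - p) ^ s) / 2) ^ (n - s) ≤ exp a * exp (-(2 * a)) :=
        mul_le_mul h2 hρ (by positivity) (exp_pos _).le
    _ = exp (-a) := by rw [← exp_add]; ring_nf
    _ ≤ exp (((4 * s : ℕ) : ℝ) * log (n : ℝ)⁻¹) := by
        rw [log_inv]; push_cast
        exact exp_le_exp.2 (by nlinarith [mul_le_mul_of_nonneg_right hnp s.cast_nonneg, ha])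
    _ = ((n : ℝ)⁻¹) ^ (4 * s) := by rw [exp_nat_mul, exp_log (by positivity)]

theorem sum_nonempty_inv_card_pow_le {α : Type*} [Fintype α] :
    ∑ S : Finset α with S.Nonempty, ((Fintype.card α : ℝ)⁻¹) ^ (4 * #S) ≤
      3 / Fintype.card α ^ 2 := by
  set m := Fintype.card α
  set x : ℝ := (m : ℝ)⁻¹
  have hx0 : 0 ≤ x := by positivity
  have hx1 : x ≤ 1 := Nat.cast_inv_le_one m
  calc ∑ S : Finset α with S.Nonempty, x ^ (4 * #S)
      ≤ ∑ S : Finset α with S.Nonempty, x ^ 3 * x ^ #S := by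
        refine sum_le_sum fun S hS => ?_
        have := (mem_filter.1 hS).2.card_pos
        rw [← pow_add]
        exact pow_le_pow_of_le_one hx0 hx1 (by omega)
    _ ≤ ∑ S : Finset α, x ^ 3 * x ^ #S :=
        sum_le_sum_of_subset_of_nonneg (filter_subset _ _) fun _ _ _ => by positivity
    _ = x ^ 3 * (x + 1) ^ m := by
        rw [← mul_sum, ← Fintype.sum_pow_mul_eq_add_pow]; simp
    _ ≤ x ^ 3 * 3 := by
        gcongr
        calc (x + 1) ^ m ≤ exp x ^ m := by gcongr; exact add_one_le_exp x
          _ ≤ exp 1 := by rw [← exp_nat_mul]; exact exp_le_exp.2 mul_inv_le_one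
          _ ≤ 3 := by linarith [exp_one_lt_d9]
    _ ≤ 3 / m ^ 2 := by
        rw [div_eq_mul_inv, ← inv_pow, mul_comm]
        exact mul_le_mul_of_nonneg_left (pow_le_pow_of_le_one hx0 hx1 (by norm_num)) (by norm_num)

end Estimates

namespace STCPaper

variable {n : ℕ} {p : ℝ}

instance : IsProbabilityMeasure (erdosRenyi n p) := by
  unfold erdosRenyi; infer_instance

theorem erdosRenyi_forall_eq_false (hp1 : p ≤ 1) (F : Finset (Sym2 (Fin n))) :
    erdosRenyi n p {ω | ∀ e ∈ F, ω e = false} = (1 - ENNReal.ofReal p) ^ #F := by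
  have hcyl : {ω : Sym2 (Fin n) → Bool | ∀ e ∈ F, ω e = false} =
      Set.univ.pi fun e => if e ∈ F then {false} else Set.univ := by
    ext ω; simp only [Set.mem_ofPred_eq, Set.mem_pi, Set.mem_univ, true_implies]
    refine forall_congr' fun e => ?_
    split_ifs <;> simp [*]
  rw [hcyl, erdosRenyi, Measure.pi_pi]
  simp only [apply_ite, measure_univ]
  rw [prod_ite_mem univ F, univ_inter, prod_const,
    PMF.toMeasure_apply_singleton _ _ (measurableSet_singleton _), PMF.bernoulli_apply,
    min_eq_left (Real.toNNReal_le_one.mpr hp1)]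
  rfl

def noEdgeFrom (S : Finset (Fin n)) (v : Fin n) : Set (Sym2 (Fin n) → Bool) :=
  {ω | ∀ u ∈ S, ω s(u, v) = false}

theorem erdosRenyi_biInter_noEdgeFrom (hp1 : p ≤ 1) (S : Finset (Fin n))
    (J : Finset {v // v ∉ S}) :
    erdosRenyi n p (⋂ v ∈ J, noEdgeFrom S v) = (1 - ENNReal.ofReal p) ^ (#S * #J) := by
  have hinj : Set.InjOn (fun x : Fin n × {v // v ∉ S} => s(x.1, x.2.1)) ↑(S ×ˢ J) := by
    rintro ⟨u, v, hv⟩ huv ⟨u', v', hv'⟩ huv' h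
    simp only [coe_product, Set.mem_prod, mem_coe] at huv huv'
    rcases Sym2.eq_iff.1 h with ⟨rfl, rfl⟩ | ⟨rfl, rfl⟩
    · rfl
    · exact (hv huv'.1).elim
  have hset : ⋂ v ∈ J, noEdgeFrom S v =
      {ω | ∀ e ∈ (S ×ˢ J).image fun x => s(x.1, x.2.1), ω e = false} := by
    ext ω
    simp only [noEdgeFrom, Set.mem_iInter, Set.mem_ofPred_eq, mem_image, mem_product,
      Prod.exists, forall_exists_index, and_imp]
    exact ⟨fun h e u v hu hv he => he ▸ h v hv u hu, fun h v hv u hu => h _ u v hu hv rfl⟩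
  rw [hset, erdosRenyi_forall_eq_false hp1, card_image_of_injOn hinj, card_product]

theorem erdosRenyi_noEdgeFrom (hp1 : p ≤ 1) {S : Finset (Fin n)} {v : Fin n} (hv : v ∉ S) :
    erdosRenyi n p (noEdgeFrom S v) = (1 - ENNReal.ofReal p) ^ #S := by
  simpa using erdosRenyi_biInter_noEdgeFrom hp1 S {⟨v, hv⟩}

theorem iIndepSet_noEdgeFrom (hp1 : p ≤ 1) (S : Finset (Fin n)) :
    iIndepSet (fun v : {v // v ∉ S} => noEdgeFrom S v) (erdosRenyi n p) := by
  rw [iIndepSet_iff_meas_biInter fun _ => (Set.toFinite _).measurableSet]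
  intro J
  rw [erdosRenyi_biInter_noEdgeFrom hp1, prod_congr rfl fun v _ => erdosRenyi_noEdgeFrom hp1 v.2,
    prod_const, pow_mul]

open scoped Classical in
theorem nbrCount_graphOf (S : Finset (Fin n)) (ω : Sym2 (Fin n) → Bool) :
    nbrCount (graphOf ω) S = #{v : {v // v ∉ S} | ω ∉ noEdgeFrom S v} := by
  have hN : {v | v ∉ (S : Set (Fin n)) ∧ ∃ u ∈ (S : Set (Fin n)), (graphOf ω).Adj u v} =
      Subtype.val '' {v : {v // v ∉ S} | ω ∉ noEdgeFrom S v} := by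
    ext v
    simp only [noEdgeFrom, graphOf, fromEdgeSet_adj, Set.mem_ofPred_eq, Set.mem_image,
      Subtype.exists, exists_and_right, exists_eq_right, mem_coe, not_forall, Bool.not_eq_false]
    exact ⟨fun ⟨hv, u, hu, he, _⟩ => ⟨hv, u, hu, he⟩,
      fun ⟨hv, u, hu, he⟩ => ⟨hv, u, hu, he, fun huv => hv (huv ▸ hu)⟩⟩
  rw [nbrCount, hN, Set.ncard_image_of_injective _ Subtype.val_injective, ← Set.ncard_coe_finset,
    coe_filter]
  simp only [mem_univ, true_and]

theorem erdosRenyi_nbrCount_le (hp0 : 0 ≤ p) (hp1 : p ≤ 1) (S : Finset (Fin n)) (k : ℕ) :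
    erdosRenyi n p {ω | nbrCount (graphOf ω) S ≤ k} ≤
      ENNReal.ofReal (2 ^ k * ((1 + (1 - p) ^ #S) / 2) ^ (n - #S)) := by
  classical
  have hZ : ∀ v : {v // v ∉ S},
      erdosRenyi n p (noEdgeFrom S v) ≤ ENNReal.ofReal ((1 - p) ^ #S) := fun v => by
    rw [erdosRenyi_noEdgeFrom hp1 v.2, ENNReal.ofReal_pow (by linarith), ENNReal.ofReal_sub _ hp0,
      ENNReal.ofReal_one]
  have hcard : Fintype.card {v // v ∉ S} = n - #S := by simp [Fintype.card_subtype_compl]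
  simp_rw [nbrCount_graphOf]
  rw [← hcard]
  exact (iIndepSet_noEdgeFrom hp1 S).measure_card_notMem_le
    (fun _ => (Set.toFinite _).measurableSet) (by positivity) hZ k

theorem erdosRenyi_exists_nbrCount_lt_le (hn : 2 ≤ n) (hp : 64 * Real.log n / n ≤ p)
    (hp1 : p ≤ 1) :
    erdosRenyi n p {ω : Sym2 (Fin n) → Bool | ∃ S : Finset (Fin n), S.Nonempty ∧
      (#S : ℝ) ≤ 1 / p ∧ (nbrCount (graphOf ω) S : ℝ) < n * p / 16 * #S} ≤
      ENNReal.ofReal (3 / n ^ 2) := by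
  have hp0 : 0 < p := by
    have : 0 < Real.log n := Real.log_pos (by exact_mod_cast hn)
    exact lt_of_lt_of_le (by positivity) hp
  set 𝒮 : Finset (Finset (Fin n)) := {S | S.Nonempty ∧ (#S : ℝ) ≤ 1 / p}
  have h𝒮 : 𝒮 ⊆ ({S | S.Nonempty} : Finset (Finset (Fin n))) := fun S hS =>
    mem_filter.2 ⟨mem_univ _, (mem_filter.1 hS).2.1⟩
  calc _ ≤ erdosRenyi n p (⋃ S ∈ 𝒮, {ω | nbrCount (graphOf ω) S ≤ ⌊(n : ℝ) * p / 16 * #S⌋₊}) := by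
        refine measure_mono fun ω ⟨S, hS, hSp, hlt⟩ => ?_
        exact Set.mem_biUnion (mem_filter.2 ⟨mem_univ _, hS, hSp⟩) (Nat.le_floor hlt.le)
    _ ≤ ∑ S ∈ 𝒮, erdosRenyi n p {ω | nbrCount (graphOf ω) S ≤ ⌊(n : ℝ) * p / 16 * #S⌋₊} :=
        measure_biUnion_finset_le _ _
    _ ≤ ∑ S ∈ 𝒮, ENNReal.ofReal (((n : ℝ)⁻¹) ^ (4 * #S)) := sum_le_sum fun S hS =>
        (erdosRenyi_nbrCount_le hp0.le hp1 S _).trans <| ENNReal.ofReal_le_ofReal <|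
          two_pow_floor_mul_pow_le hn hp hp1 (mem_filter.1 hS).2.2
    _ = ENNReal.ofReal (∑ S ∈ 𝒮, ((n : ℝ)⁻¹) ^ (4 * #S)) :=
        (ENNReal.ofReal_sum_of_nonneg fun _ _ => by positivity).symm
    _ ≤ ENNReal.ofReal (3 / n ^ 2) := by
        refine ENNReal.ofReal_le_ofReal ((sum_le_sum_of_subset_of_nonneg h𝒮
          fun _ _ _ => by positivity).trans ?_)
        simpa using sum_nonempty_inv_card_pow_le (α := Fin n)

end STCPaper

open STCPaper in
/-- With probability at least `1 − C/n²`, every nonempty set `S` with `|S| ≤ 1/p` in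
`G(n,p)` satisfies `|N(S)| ≥ (np/16)·|S|`. -/
theorem stmt_13 :
    ∃ C : ℝ, 0 < C ∧ ∃ n₀ : ℕ, ∀ n : ℕ, n₀ ≤ n → ∀ p : ℝ,
      64 * Real.log n / n ≤ p → p ≤ 1 →
      ENNReal.ofReal (1 - C / (n : ℝ) ^ 2) ≤
        erdosRenyi n p {ω | ∀ S : Finset (Fin n), S.Nonempty → (S.card : ℝ) ≤ 1 / p →
          (n : ℝ) * p / 16 * S.card ≤ (nbrCount (graphOf ω) ↑S : ℝ)} := by
  refine ⟨3, by norm_num, 2, fun n hn p hp hp1 => ?_⟩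
  set B := {ω : Sym2 (Fin n) → Bool | ∃ S : Finset (Fin n), S.Nonempty ∧ (#S : ℝ) ≤ 1 / p ∧
    (nbrCount (graphOf ω) S : ℝ) < n * p / 16 * #S}
  have hgood : {ω | ∀ S : Finset (Fin n), S.Nonempty → (S.card : ℝ) ≤ 1 / p →
      (n : ℝ) * p / 16 * S.card ≤ (nbrCount (graphOf ω) ↑S : ℝ)} = Bᶜ := by
    ext ω
    simp [B]
  rw [hgood, prob_compl_eq_one_sub (Set.toFinite B).measurableSet,
    ENNReal.ofReal_sub _ (by positivity), ENNReal.ofReal_one]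
  exact tsub_le_tsub_left (erdosRenyi_exists_nbrCount_lt_le hn hp hp1) 1
end
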